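/- The averaging projection onto Hankel matrices, defined on matrices of operators T on ℓ² by (𝒫T)_{jk} = (1/(j+k+1)) Σ_{m=0}^{j+k} ⟨T e_m, e_{j+k−m}⟩, is not bounded on the trace class S₁: there is no constant C such that ‖𝒫T‖_{S₁} ≤ C ‖T‖_{S₁} for all finite-rank operators T on ℓ². -/

import Mathlib

open MeasureTheory Complex Real

noncomputable section

/-- ℓ² of ℕ over ℂ. -/
abbrev l2 : Type := lp (fun _ : ℕ => ℂ) 2

/-- The `j`-th singular value of a bounded operator on ℓ²:
`s_j(T) = inf {‖T − R‖ : rank R ≤ j}`. -/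
noncomputable def sVal (T : l2 →L[ℂ] l2) (j : ℕ) : ℝ :=
  sInf {c : ℝ | ∃ R : l2 →L[ℂ] l2,
    Module.rank ℂ (LinearMap.range (R : l2 →ₗ[ℂ] l2)) ≤ (j : Cardinal) ∧ c = ‖T - R‖}

namespace AvgProj

open ENNReal

/-- Coordinate evaluation as a continuous linear functional on ℓ². -/
noncomputable def ev (i : ℕ) : l2 →L[ℂ] ℂ :=
  LinearMap.mkContinuous
    { toFun := fun f => f i
      map_add' := fun f g => congrFun (lp.coeFn_add f g) i
      map_smul' := fun c f => by simpa using congrFun (lp.coeFn_smul c f) i }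
    1 (fun f => by
      rw [one_mul]; exact lp.norm_apply_le_norm (by norm_num : (2 : ℝ≥0∞) ≠ 0) f i)

@[simp] lemma ev_apply (i : ℕ) (x : l2) : ev i x = x i := rfl

/-- Standard basis vector of ℓ². -/
noncomputable def std (i : ℕ) : l2 := lp.single 2 i (1 : ℂ)

lemma std_apply (i j : ℕ) : (std i : ℕ → ℂ) j = if j = i then 1 else 0 := by
  simp [std, lp.single_apply, Pi.single_apply]

lemma orthonormal_std : Orthonormal ℂ std := by
  rw [orthonormal_iff_ite]
  intro i j
  rw [std, lp.inner_single_left]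
  simp [std, lp.single_apply, Pi.single_apply, RCLike.inner_apply]

lemma norm_std (i : ℕ) : ‖std i‖ = 1 := by
  have := lp.norm_single (p := 2) (E := fun _ : ℕ => ℂ) (by norm_num) i (1:ℂ)
  simpa [std] using this

lemma coord_sum_single {ι : Type*} (s : Finset ι) (pos : ι → ℕ) (γ : ι → ℂ) (m : ℕ) :
    ((∑ i ∈ s, lp.single 2 (pos i) (γ i) : l2) : ℕ → ℂ) m
      = ∑ i ∈ s, if m = pos i then γ i else 0 := by
  rw [lp.coeFn_sum, Finset.sum_apply]
  exact Finset.sum_congr rfl fun i _ => by simp [lp.single_apply, Pi.single_apply]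

lemma norm_sq_sum_single {d : ℕ} (pos : Fin d → ℕ) (hpos : Function.Injective pos)
    (γ : Fin d → ℂ) :
    ‖(∑ i, lp.single 2 (pos i) (γ i) : l2)‖ ^ 2 = ∑ i, ‖γ i‖ ^ 2 := by
  classical
  have h2 : (0:ℝ) < (2 : ℝ≥0∞).toReal := by norm_num
  set β : ℕ → ℂ := Function.extend pos γ 0 with hβ
  have himg : (∑ m ∈ Finset.univ.image pos, lp.single 2 m (β m) : l2)
      = ∑ i, lp.single 2 (pos i) (γ i) := by
    rw [Finset.sum_image (fun a _ b _ h => hpos h)]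
    exact Finset.sum_congr rfl fun i _ => by rw [hβ, hpos.extend_apply]
  have h := lp.norm_sum_single (E := fun _ : ℕ => ℂ) h2 β (Finset.univ.image pos)
  rw [himg, Finset.sum_image (fun a _ b _ h => hpos h)] at h
  have htR : ((2 : ℝ≥0∞)).toReal = ((2:ℕ) : ℝ) := by norm_num
  rw [htR] at h
  simp only [Real.rpow_natCast] at h
  rw [h]
  exact Finset.sum_congr rfl fun i _ => by rw [hβ, hpos.extend_apply]

/-- Bessel's inequality for coordinates of ℓ². -/
lemma bessel {d : ℕ} (pos : Fin d → ℕ) (hpos : Function.Injective pos) (y : l2) :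
    ∑ i, ‖(y : ℕ → ℂ) (pos i)‖ ^ 2 ≤ ‖y‖ ^ 2 := by
  have hv : Orthonormal ℂ (std ∘ pos) := orthonormal_std.comp pos hpos
  have h := hv.sum_inner_products_le (s := Finset.univ) y
  have hinner : ∀ i : Fin d, (inner ℂ ((std ∘ pos) i) y : ℂ) = y (pos i) := by
    intro i
    simp only [Function.comp_apply, std]
    rw [lp.inner_single_left]
    simp [RCLike.inner_apply]
  calc ∑ i, ‖(y : ℕ → ℂ) (pos i)‖ ^ 2
      = ∑ i, ‖(inner ℂ ((std ∘ pos) i) y : ℂ)‖ ^ 2 :=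
        Finset.sum_congr rfl fun i _ => by rw [hinner]
    _ ≤ ‖y‖ ^ 2 := h

/-- The cheap finite-rank operator `T = e₀ ⊗ (∑ₖ e_{2^k})`. -/
noncomputable def Top (K : ℕ) : l2 →L[ℂ] l2 :=
  (∑ k ∈ Finset.range K, ev (2 ^ k)).smulRight (std 0)

/-- The Hankel matrix `𝒫T`, supported on the antidiagonals `j + k = 2^m`. -/
noncomputable def Sop (K : ℕ) : l2 →L[ℂ] l2 :=
  ∑ k ∈ Finset.range K, ∑ t ∈ Finset.range (2 ^ k + 1),
    ((2 ^ k + 1 : ℂ))⁻¹ • ((ev (2 ^ k - t)).smulRight (std t))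

lemma Top_apply (K : ℕ) (x : l2) :
    Top K x = (∑ k ∈ Finset.range K, (x : ℕ → ℂ) (2 ^ k)) • std 0 := by
  simp [Top, ContinuousLinearMap.smulRight_apply, ContinuousLinearMap.sum_apply]

lemma Sop_coord (K : ℕ) (x : l2) (i : ℕ) :
    (Sop K x : ℕ → ℂ) i
      = ∑ k ∈ Finset.range K,
          if i ≤ 2 ^ k then ((2 ^ k + 1 : ℂ))⁻¹ * (x : ℕ → ℂ) (2 ^ k - i) else 0 := by
  rw [Sop]
  rw [ContinuousLinearMap.sum_apply, lp.coeFn_sum, Finset.sum_apply]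
  refine Finset.sum_congr rfl fun k _ => ?_
  rw [ContinuousLinearMap.sum_apply, lp.coeFn_sum, Finset.sum_apply]
  have hterm : ∀ t ∈ Finset.range (2 ^ k + 1),
      ((((2 ^ k + 1 : ℂ))⁻¹ • ((ev (2 ^ k - t)).smulRight (std t))) x : ℕ → ℂ) i
        = if i = t then ((2 ^ k + 1 : ℂ))⁻¹ * (x : ℕ → ℂ) (2 ^ k - t) else 0 := by
    intro t _
    rw [ContinuousLinearMap.smul_apply, ContinuousLinearMap.smulRight_apply]
    rw [congrFun (lp.coeFn_smul ((2 ^ k + 1 : ℂ))⁻¹ ((ev (2 ^ k - t) x) • std t)) i]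
    rw [Pi.smul_apply, congrFun (lp.coeFn_smul (ev (2 ^ k - t) x) (std t)) i, Pi.smul_apply]
    rw [std_apply]
    simp only [ev_apply, smul_eq_mul]
    split <;> simp
  rw [Finset.sum_congr rfl hterm, Finset.sum_ite_eq (Finset.range (2 ^ k + 1)) i
    (fun t => ((2 ^ k + 1 : ℂ))⁻¹ * (x : ℕ → ℂ) (2 ^ k - t))]
  simp [Nat.lt_succ_iff]

/-- The key matrix identity: `Sop K` is the averaging projection of `Top K`. -/
lemma hankel_eq (K : ℕ) (j k' : ℕ) :
    ((Sop K) (lp.single 2 k' 1)) j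
      = (1 / ((j : ℂ) + (k' : ℂ) + 1)) *
          ∑ m ∈ Finset.range (j + k' + 1), ((Top K) (lp.single 2 m 1)) (j + k' - m) := by
  have hL : ((Sop K) (lp.single 2 k' 1)) j
      = ∑ k ∈ Finset.range K, if 2 ^ k = j + k' then ((j : ℂ) + (k' : ℂ) + 1)⁻¹ else 0 := by
    rw [show (lp.single 2 k' (1:ℂ)) = std k' from rfl, Sop_coord]
    refine Finset.sum_congr rfl fun k _ => ?_
    by_cases h : 2 ^ k = j + k'
    · have hj : j ≤ 2 ^ k := by omega
      have hsub : 2 ^ k - j = k' := by omega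
      rw [if_pos hj, if_pos h, hsub, std_apply, if_pos rfl, mul_one]
      congr 1
      have : ((2:ℂ) ^ k : ℂ) = ((2 ^ k : ℕ) : ℂ) := by push_cast; ring
      rw [this, h]
      push_cast; ring
    · by_cases hj : j ≤ 2 ^ k
      · have hne : 2 ^ k - j ≠ k' := by omega
        rw [if_pos hj, std_apply, if_neg hne, mul_zero, if_neg h]
      · rw [if_neg hj, if_neg h]
  have hR : ∀ m : ℕ, ((Top K) (lp.single 2 m 1)) (j + k' - m)
      = (∑ k ∈ Finset.range K, if 2 ^ k = m then (1:ℂ) else 0)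
          * (if j + k' - m = 0 then 1 else 0) := by
    intro m
    rw [show (lp.single 2 m (1:ℂ)) = std m from rfl, Top_apply]
    rw [congrFun (lp.coeFn_smul _ (std 0)) (j + k' - m), Pi.smul_apply, std_apply,
      smul_eq_mul]
    congr 1
    exact Finset.sum_congr rfl fun k _ => by rw [std_apply]
  have hsum : ∑ m ∈ Finset.range (j + k' + 1), ((Top K) (lp.single 2 m 1)) (j + k' - m)
      = ∑ k ∈ Finset.range K, if 2 ^ k = j + k' then (1:ℂ) else 0 := by
    rw [Finset.sum_congr rfl fun m _ => hR m]
    rw [Finset.sum_eq_single (j + k')]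
    · simp
    · intro m hm hne
      have : ¬ (j + k' - m = 0) := by
        simp only [Finset.mem_range, Nat.lt_succ_iff] at hm
        omega
      simp [this]
    · intro h; simp at h
  rw [hL, hsum, Finset.mul_sum]
  refine Finset.sum_congr rfl fun k _ => ?_
  rw [mul_ite, mul_one, mul_zero, one_div]

lemma sum_coord_le (Kn : ℕ) (x : l2) :
    ‖∑ k ∈ Finset.range Kn, (x : ℕ → ℂ) (2 ^ k)‖ ≤ Real.sqrt Kn * ‖x‖ := by
  have hinj : Function.Injective (fun k : Fin Kn => 2 ^ (k : ℕ)) := by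
    intro a b h
    exact Fin.ext (Nat.pow_right_injective (le_refl 2) h)
  have hb : ∑ k : Fin Kn, ‖(x : ℕ → ℂ) (2 ^ (k:ℕ))‖ ^ 2 ≤ ‖x‖ ^ 2 := bessel _ hinj x
  have hcs : (∑ k : Fin Kn, ‖(x : ℕ → ℂ) (2 ^ (k:ℕ))‖) ^ 2
      ≤ (Finset.univ.card : ℝ) * ∑ k : Fin Kn, ‖(x : ℕ → ℂ) (2 ^ (k:ℕ))‖ ^ 2 :=
    sq_sum_le_card_mul_sum_sq
  have hcard : ((Finset.univ : Finset (Fin Kn)).card : ℝ) = (Kn : ℝ) := by simp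
  have h1 : ‖∑ k ∈ Finset.range Kn, (x : ℕ → ℂ) (2 ^ k)‖
      ≤ ∑ k : Fin Kn, ‖(x : ℕ → ℂ) (2 ^ (k:ℕ))‖ := by
    rw [← Fin.sum_univ_eq_sum_range (fun k => (x : ℕ → ℂ) (2 ^ k)) Kn]
    exact norm_sum_le _ _
  have h2 : (∑ k : Fin Kn, ‖(x : ℕ → ℂ) (2 ^ (k:ℕ))‖) ≤ Real.sqrt Kn * ‖x‖ := by
    have hnn : (0:ℝ) ≤ ∑ k : Fin Kn, ‖(x : ℕ → ℂ) (2 ^ (k:ℕ))‖ :=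
      Finset.sum_nonneg fun _ _ => norm_nonneg _
    have hsq : (∑ k : Fin Kn, ‖(x : ℕ → ℂ) (2 ^ (k:ℕ))‖) ^ 2 ≤ (Real.sqrt Kn * ‖x‖) ^ 2 := by
      rw [mul_pow, Real.sq_sqrt (by positivity : (0:ℝ) ≤ (Kn:ℝ))]
      calc (∑ k : Fin Kn, ‖(x : ℕ → ℂ) (2 ^ (k:ℕ))‖) ^ 2
          ≤ (Kn : ℝ) * ∑ k : Fin Kn, ‖(x : ℕ → ℂ) (2 ^ (k:ℕ))‖ ^ 2 := by
            rw [← hcard]; exact hcs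
        _ ≤ (Kn : ℝ) * ‖x‖ ^ 2 := mul_le_mul_of_nonneg_left hb (by positivity)
    exact (pow_le_pow_iff_left₀ hnn (by positivity) (by norm_num)).mp hsq
  exact h1.trans h2

lemma Top_norm_le (K : ℕ) : ‖Top K‖ ≤ Real.sqrt K := by
  apply ContinuousLinearMap.opNorm_le_bound _ (Real.sqrt_nonneg _)
  intro x
  rw [Top_apply, norm_smul, norm_std, mul_one]
  exact sum_coord_le K x

lemma sVal_nonneg (T : l2 →L[ℂ] l2) (j : ℕ) : 0 ≤ sVal T j :=
  Real.sInf_nonneg (by rintro c ⟨R, -, rfl⟩; exact norm_nonneg _)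

lemma sVal_bddBelow (T : l2 →L[ℂ] l2) (j : ℕ) :
    BddBelow {c : ℝ | ∃ R : l2 →L[ℂ] l2,
      Module.rank ℂ (LinearMap.range (R : l2 →ₗ[ℂ] l2)) ≤ (j : Cardinal) ∧ c = ‖T - R‖} :=
  ⟨0, by rintro c ⟨R, -, rfl⟩; exact norm_nonneg _⟩

lemma zero_rank_mem (T : l2 →L[ℂ] l2) (j : ℕ) :
    ‖T‖ ∈ {c : ℝ | ∃ R : l2 →L[ℂ] l2,
      Module.rank ℂ (LinearMap.range (R : l2 →ₗ[ℂ] l2)) ≤ (j : Cardinal) ∧ c = ‖T - R‖} := by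
  refine ⟨0, ?_, by rw [sub_zero]⟩
  have h0 : ((0 : l2 →L[ℂ] l2) : l2 →ₗ[ℂ] l2) = 0 := rfl
  rw [h0, LinearMap.range_zero]
  simpa [rank_bot] using (zero_le ((j : Cardinal)))

lemma sVal_le_norm (T : l2 →L[ℂ] l2) (j : ℕ) : sVal T j ≤ ‖T‖ :=
  csInf_le (sVal_bddBelow T j) (zero_rank_mem T j)

lemma rank_Top_le (K : ℕ) :
    Module.rank ℂ (LinearMap.range ((Top K : l2 →L[ℂ] l2) : l2 →ₗ[ℂ] l2)) ≤ (1 : Cardinal) := by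
  have hle : LinearMap.range ((Top K : l2 →L[ℂ] l2) : l2 →ₗ[ℂ] l2)
      ≤ Submodule.span ℂ {std 0} := by
    rintro y ⟨x, rfl⟩
    rw [ContinuousLinearMap.coe_coe, Top_apply]
    exact Submodule.smul_mem _ _ (Submodule.mem_span_singleton_self _)
  calc Module.rank ℂ (LinearMap.range ((Top K : l2 →L[ℂ] l2) : l2 →ₗ[ℂ] l2))
      ≤ Module.rank ℂ (Submodule.span ℂ {std 0}) := Submodule.rank_mono hle
    _ ≤ Cardinal.mk ({std 0} : Set l2) := rank_span_le _
    _ = 1 := Cardinal.mk_singleton _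

lemma sVal_Top_eq_zero (K : ℕ) {j : ℕ} (hj : j ≠ 0) : sVal (Top K) j = 0 := by
  refine le_antisymm ?_ (sVal_nonneg _ _)
  apply csInf_le (sVal_bddBelow _ _)
  refine ⟨Top K, ?_, by rw [sub_self, norm_zero]⟩
  refine (rank_Top_le K).trans ?_
  have h1 : (1:ℕ) ≤ j := Nat.one_le_iff_ne_zero.mpr hj
  calc (1 : Cardinal) = ((1:ℕ) : Cardinal) := by norm_cast
    _ ≤ ((j:ℕ) : Cardinal) := Nat.cast_le.mpr h1

lemma tsum_sVal_Top_le (K : ℕ) : ∑' j : ℕ, sVal (Top K) j ≤ Real.sqrt K := by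
  rw [tsum_eq_single 0 (fun b hb => sVal_Top_eq_zero K hb)]
  exact (sVal_le_norm _ _).trans (Top_norm_le K)

lemma tsum_sVal_Top_nonneg (K : ℕ) : 0 ≤ ∑' j : ℕ, sVal (Top K) j := by
  rw [tsum_eq_single 0 (fun b hb => sVal_Top_eq_zero K hb)]
  exact sVal_nonneg _ _

lemma findim_Top (K : ℕ) :
    FiniteDimensional ℂ (LinearMap.range ((Top K : l2 →L[ℂ] l2) : l2 →ₗ[ℂ] l2)) := by
  have hle : LinearMap.range ((Top K : l2 →L[ℂ] l2) : l2 →ₗ[ℂ] l2)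
      ≤ Submodule.span ℂ {std 0} := by
    rintro y ⟨x, rfl⟩
    rw [ContinuousLinearMap.coe_coe, Top_apply]
    exact Submodule.smul_mem _ _ (Submodule.mem_span_singleton_self _)
  have : FiniteDimensional ℂ (Submodule.span ℂ ({std 0} : Set l2)) := by
    rw [show ({std 0} : Set l2) = (({std 0} : Finset l2) : Set l2) by simp]
    exact FiniteDimensional.span_finset ℂ _
  exact Submodule.finiteDimensional_of_le hle

/-- The main lower bound on singular values of `Sop K`. -/
lemma sVal_Sop_ge (K k j : ℕ) (hk1 : 1 ≤ k) (hkK : k < K) (hj : j < 2 ^ (k - 1)) :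
    ((2:ℝ) ^ k + 1)⁻¹ ≤ sVal (Sop K) j := by
  classical
  set d := 2 ^ (k - 1) with hd
  have h2k : 2 ^ k = d + d := by
    rw [hd]
    conv_lhs => rw [← Nat.succ_pred_eq_of_pos hk1]
    rw [pow_succ, mul_two, Nat.pred_eq_sub_one]
  have hdpos : 0 < d := Nat.pow_pos (by norm_num)
  set pos : Fin d → ℕ := fun i => d + 1 + (i : ℕ) with hposdef
  have hpos : Function.Injective pos := by
    intro a b hab
    simp only [hposdef] at hab
    exact Fin.ext (by omega)
  apply le_csInf ⟨‖Sop K‖, zero_rank_mem _ _⟩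
  rintro c ⟨R, hR, rfl⟩
  let xof : (Fin d → ℂ) →ₗ[ℂ] l2 :=
    ∑ i : Fin d, (LinearMap.proj i).smulRight (std (pos i))
  have hxof : ∀ α : Fin d → ℂ, xof α = ∑ i : Fin d, lp.single 2 (pos i) (α i) := by
    intro α
    have h1 : xof α = ∑ i : Fin d, α i • std (pos i) := by
      simp [xof, LinearMap.sum_apply, LinearMap.smulRight_apply, LinearMap.proj_apply]
    rw [h1]
    refine Finset.sum_congr rfl fun i _ => ?_
    rw [std, ← lp.single_smul]
    simp
  let g : (Fin d → ℂ) →ₗ[ℂ] (LinearMap.range ((R : l2 →ₗ[ℂ] l2))) :=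
    (R : l2 →ₗ[ℂ] l2).rangeRestrict.comp xof
  have hginj : ¬ Function.Injective g := by
    intro hinj
    have h1 := LinearMap.rank_le_of_injective g hinj
    rw [rank_fin_fun] at h1
    have h2 : (d : Cardinal) ≤ (j : Cardinal) := h1.trans hR
    have : d ≤ j := by exact_mod_cast h2
    omega
  obtain ⟨a, b, hab, hne⟩ := Function.not_injective_iff.mp hginj
  set α : Fin d → ℂ := a - b with hα
  have hα0 : α ≠ 0 := sub_ne_zero.mpr hne
  set y : l2 := xof α with hy
  have hy_eq : y = ∑ i : Fin d, lp.single 2 (pos i) (α i) := hxof α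
  have h0 : g α = 0 := by rw [hα, map_sub, hab, sub_self]
  have hRy : R y = 0 := by
    have := congrArg Subtype.val h0
    simpa [g, hy] using this
  have hycoord : ∀ m : ℕ, (y : ℕ → ℂ) m = ∑ i : Fin d, if m = pos i then α i else 0 := by
    intro m
    rw [hy_eq]
    exact coord_sum_single Finset.univ pos α m
  have hynorm : ‖y‖ ^ 2 = ∑ i : Fin d, ‖α i‖ ^ 2 := by
    rw [hy_eq]; exact norm_sq_sum_single pos hpos α
  have hGpos : 0 < ∑ i : Fin d, ‖α i‖ ^ 2 := by
    obtain ⟨i, hi⟩ := Function.ne_iff.mp hα0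
    refine Finset.sum_pos' (fun _ _ => by positivity) ⟨i, Finset.mem_univ i, ?_⟩
    have : α i ≠ 0 := by simpa using hi
    have h1 : 0 < ‖α i‖ := norm_pos_iff.mpr this
    positivity
  have hsqpos : 0 < ‖y‖ ^ 2 := hynorm ▸ hGpos
  have hyne : ‖y‖ ≠ 0 := by intro hh; rw [hh] at hsqpos; simp at hsqpos
  have hy0 : 0 < ‖y‖ := (norm_nonneg y).lt_of_ne' hyne
  -- coordinates of S y
  have hSy : ∀ j' : Fin d, ((Sop K y) : ℕ → ℂ) (j' : ℕ) = ((2:ℂ) ^ k + 1)⁻¹ * α (Fin.rev j') := by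
    intro j'
    have hj'd : (j' : ℕ) < d := j'.isLt
    rw [Sop_coord]
    rw [Finset.sum_eq_single k]
    · have hle : (j' : ℕ) ≤ 2 ^ k := by omega
      rw [if_pos hle]
      congr 1
      rw [hycoord]
      have hrev : 2 ^ k - (j' : ℕ) = pos (Fin.rev j') := by
        simp only [hposdef, Fin.val_rev]
        omega
      rw [Finset.sum_eq_single (Fin.rev j')]
      · rw [if_pos hrev]
      · intro i _ hne2
        rw [if_neg]
        intro hcontra
        apply hne2
        apply Fin.ext
        have h1 : pos i = 2 ^ k - (j' : ℕ) := hcontra.symm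
        simp only [hposdef] at h1
        rw [Fin.val_rev]
        omega
      · intro hmem; exact absurd (Finset.mem_univ _) hmem
    · intro m hm hmk
      split_ifs with hle
      · rw [hycoord, Finset.sum_eq_zero, mul_zero]
        intro i _
        rw [if_neg]
        intro hcontra
        simp only [hposdef] at hcontra
        have hio : (i : ℕ) < d := i.isLt
        rcases Nat.lt_or_ge m k with hlt | hge
        · have h1 : 2 ^ m ≤ d := by
            rw [hd]; exact Nat.pow_le_pow_right (by norm_num) (by omega)
          omega
        · have hgt : k < m := lt_of_le_of_ne hge (Ne.symm hmk)
          have h1 : 2 ^ (k + 1) ≤ 2 ^ m := Nat.pow_le_pow_right (by norm_num) (by omega)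
          have h2 : 2 ^ (k + 1) = 2 ^ k + 2 ^ k := by rw [pow_succ, mul_two]
          omega
      · rfl
    · intro hk'; exact absurd (Finset.mem_range.mpr hkK) hk'
  set cR : ℝ := ((2:ℝ) ^ k + 1)⁻¹ with hcR
  have hcnorm : ‖((2:ℂ) ^ k + 1)⁻¹‖ = cR := by
    rw [norm_inv, hcR]
    congr 1
    have hcast : ((2:ℂ) ^ k + 1) = (((2 ^ k + 1 : ℕ)) : ℂ) := by push_cast; ring
    rw [hcast, Complex.norm_natCast]
    push_cast; ring
  have hbess := bessel (fun j' : Fin d => (j' : ℕ)) (fun a' b' h' => Fin.ext h') (Sop K y)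
  have hsum2 : ∑ j' : Fin d, ‖((Sop K y) : ℕ → ℂ) ((j' : ℕ))‖ ^ 2
      = cR ^ 2 * ∑ i : Fin d, ‖α i‖ ^ 2 := by
    have hterm : ∀ j' : Fin d,
        ‖((Sop K y) : ℕ → ℂ) ((j' : ℕ))‖ ^ 2 = cR ^ 2 * ‖α (Fin.rev j')‖ ^ 2 := by
      intro j'
      rw [hSy j', norm_mul, hcnorm, mul_pow]
    rw [Finset.sum_congr rfl fun j' _ => hterm j', ← Finset.mul_sum]
    congr 1
    exact Fintype.sum_bijective Fin.rev Fin.rev_involutive.bijective _ _ (fun _ => rfl)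
  have hkey : cR ^ 2 * ‖y‖ ^ 2 ≤ ‖Sop K y‖ ^ 2 := by
    rw [hynorm, ← hsum2]
    exact hbess
  have hkey2 : cR * ‖y‖ ≤ ‖Sop K y‖ := by
    have h1 : (cR * ‖y‖) ^ 2 ≤ ‖Sop K y‖ ^ 2 := by rw [mul_pow]; exact hkey
    have hcRpos : (0:ℝ) < cR := by rw [hcR]; positivity
    exact (pow_le_pow_iff_left₀ (by positivity) (norm_nonneg _) (by norm_num)).mp h1
  have hSyRy : ‖Sop K y‖ = ‖(Sop K - R) y‖ := by
    rw [ContinuousLinearMap.sub_apply, hRy, sub_zero]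
  have hfinal : cR * ‖y‖ ≤ ‖Sop K - R‖ * ‖y‖ := by
    rw [hSyRy] at hkey2
    exact hkey2.trans ((Sop K - R).le_opNorm y)
  exact le_of_mul_le_mul_right hfinal hy0

end AvgProj

/-- The averaging projection onto Hankel matrices,
`(𝒫T)_{jk} = (1/(j+k+1)) Σ_{m=0}^{j+k} ⟨T e_m, e_{j+k−m}⟩`, is not bounded on the trace
class `S₁`: there is no constant `C` such that `‖𝒫T‖_{S₁} ≤ C ‖T‖_{S₁}` for all finite-rank
operators `T` on ℓ².  (The trace norm of `𝒫T` is expressed via its partial sums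
`Σ_{j∈s} s_j(𝒫T)` over all finite sets `s`.) -/
theorem averaging_projection_unbounded_on_traceClass :
    ¬ ∃ C : ℝ, ∀ T S : l2 →L[ℂ] l2,
        FiniteDimensional ℂ (LinearMap.range (T : l2 →ₗ[ℂ] l2)) →
        (∀ j k : ℕ, (S (lp.single 2 k 1)) j
          = (1 / ((j : ℂ) + (k : ℂ) + 1)) *
              ∑ m ∈ Finset.range (j + k + 1), (T (lp.single 2 m 1)) (j + k - m)) →
        ∀ s : Finset ℕ, ∑ j ∈ s, sVal S j ≤ C * ∑' j : ℕ, sVal T j := by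
  classical
  rintro ⟨C, h⟩
  set c : ℕ := ⌈|C|⌉₊ with hc
  set M : ℕ := 8 * (c + 1) with hM
  set K : ℕ := M ^ 2 with hK
  have hM8 : 8 ≤ M := by omega
  have hK64 : 64 ≤ K := by
    calc (64 : ℕ) = 8 ^ 2 := by norm_num
      _ ≤ M ^ 2 := Nat.pow_le_pow_left hM8 2
      _ = K := hK.symm
  have hK2 : 2 ≤ K := by omega
  clear_value c M K
  set s₀ : Finset ℕ :=
    (Finset.Ico 1 (K - 1)).biUnion (fun k => Finset.Ico (2 ^ (k - 1)) (2 ^ k)) with hs₀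
  have hdisj : (↑(Finset.Ico 1 (K - 1)) : Set ℕ).PairwiseDisjoint
      (fun k => Finset.Ico (2 ^ (k - 1)) (2 ^ k)) := by
    have key : ∀ {u v : ℕ}, u < v →
        Disjoint (Finset.Ico (2 ^ (u - 1)) (2 ^ u)) (Finset.Ico (2 ^ (v - 1)) (2 ^ v)) := by
      intro u v huv
      rw [Finset.disjoint_left]
      intro x hx hx'
      rw [Finset.mem_Ico] at hx hx'
      have h1 : 2 ^ u ≤ 2 ^ (v - 1) := Nat.pow_le_pow_right (by norm_num) (by omega)
      omega
    intro a _ b _ hne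
    rcases lt_or_gt_of_ne hne with hlt | hgt
    · exact key hlt
    · exact (key hgt).symm
  have hmain := h (AvgProj.Top K) (AvgProj.Sop K) (AvgProj.findim_Top K)
    (fun j k => AvgProj.hankel_eq K j k) s₀
  have hlow : ((K : ℝ) - 2) / 8 ≤ ∑ j ∈ s₀, sVal (AvgProj.Sop K) j := by
    rw [hs₀, Finset.sum_biUnion hdisj]
    have hblock : ∀ k ∈ Finset.Ico 1 (K - 1),
        (1 : ℝ) / 8 ≤ ∑ j ∈ Finset.Ico (2 ^ (k - 1)) (2 ^ k), sVal (AvgProj.Sop K) j := by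
      intro k hk
      rw [Finset.mem_Ico] at hk
      obtain ⟨hk1, hk2⟩ := hk
      have h2k : 2 ^ k = 2 ^ (k - 1) + 2 ^ (k - 1) := by
        conv_lhs => rw [← Nat.succ_pred_eq_of_pos hk1]
        rw [pow_succ, mul_two, Nat.pred_eq_sub_one]
      have hcard : (Finset.Ico (2 ^ (k - 1)) (2 ^ k)).card = 2 ^ (k - 1) := by
        rw [Nat.card_Ico, h2k, Nat.add_sub_cancel]
      have hpt : ∀ j ∈ Finset.Ico (2 ^ (k - 1)) (2 ^ k),
          ((2 : ℝ) ^ (k + 1) + 1)⁻¹ ≤ sVal (AvgProj.Sop K) j := by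
        intro j hj
        rw [Finset.mem_Ico] at hj
        refine AvgProj.sVal_Sop_ge K (k + 1) j (by omega) (by omega) ?_
        simpa using hj.2
      have hsum := Finset.card_nsmul_le_sum (Finset.Ico (2 ^ (k - 1)) (2 ^ k)) _ _ hpt
      rw [hcard] at hsum
      have hsum' : (2 ^ (k - 1) : ℝ) * ((2 : ℝ) ^ (k + 1) + 1)⁻¹
          ≤ ∑ j ∈ Finset.Ico (2 ^ (k - 1)) (2 ^ k), sVal (AvgProj.Sop K) j := by
        have : ((2 ^ (k - 1) : ℕ) : ℝ) = (2 : ℝ) ^ (k - 1) := by push_cast; ring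
        rw [← this]
        simpa [nsmul_eq_mul] using hsum
      refine le_trans ?_ hsum'
      have hx1 : (1 : ℝ) ≤ (2 : ℝ) ^ (k - 1) := one_le_pow₀ (by norm_num)
      have hpow : (2 : ℝ) ^ (k + 1) = 4 * (2 : ℝ) ^ (k - 1) := by
        have hkk : k + 1 = (k - 1) + 2 := by omega
        rw [hkk, pow_add]; ring
      rw [hpow]
      have h4 : (0 : ℝ) < 4 * (2 : ℝ) ^ (k - 1) + 1 := by positivity
      rw [← div_eq_mul_inv, le_div_iff₀ h4]
      nlinarith
    calc ((K : ℝ) - 2) / 8 = ((Finset.Ico 1 (K - 1)).card : ℝ) * ((1 : ℝ) / 8) := by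
          rw [Nat.card_Ico, Nat.cast_sub (by omega), Nat.cast_sub (by omega)]
          push_cast; ring
      _ ≤ ∑ k ∈ Finset.Ico 1 (K - 1),
            ∑ j ∈ Finset.Ico (2 ^ (k - 1)) (2 ^ k), sVal (AvgProj.Sop K) j := by
          calc ((Finset.Ico 1 (K - 1)).card : ℝ) * ((1 : ℝ) / 8)
              = ∑ _k ∈ Finset.Ico 1 (K - 1), ((1 : ℝ) / 8) := by
                rw [Finset.sum_const, nsmul_eq_mul]
            _ ≤ _ := Finset.sum_le_sum hblock
  have htM : ∑' j : ℕ, sVal (AvgProj.Top K) j ≤ (M : ℝ) := by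
    refine (AvgProj.tsum_sVal_Top_le K).trans ?_
    have hKM : ((K : ℕ) : ℝ) = ((M : ℕ) : ℝ) ^ 2 := by rw [hK]; push_cast; ring
    rw [hKM, Real.sqrt_sq (by positivity)]
  have hup : C * ∑' j : ℕ, sVal (AvgProj.Top K) j ≤ |C| * (M : ℝ) := by
    have ht0 := AvgProj.tsum_sVal_Top_nonneg K
    calc C * ∑' j : ℕ, sVal (AvgProj.Top K) j
        ≤ |C| * ∑' j : ℕ, sVal (AvgProj.Top K) j :=
          mul_le_mul_of_nonneg_right (le_abs_self C) ht0
      _ ≤ |C| * (M : ℝ) := mul_le_mul_of_nonneg_left htM (abs_nonneg C)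
  have hCc : |C| ≤ (c : ℝ) := by rw [hc]; exact Nat.le_ceil _
  have hMr : (M : ℝ) = 8 * ((c : ℝ) + 1) := by rw [hM]; push_cast; ring
  have hKr : (K : ℝ) = (M : ℝ) ^ 2 := by rw [hK]; push_cast; ring
  have hc0 : (0 : ℝ) ≤ (c : ℝ) := by positivity
  have hchain : ((K : ℝ) - 2) / 8 ≤ |C| * (M : ℝ) := hlow.trans (hmain.trans hup)
  have hchain2 : ((K : ℝ) - 2) / 8 ≤ (c : ℝ) * (M : ℝ) := by
    refine hchain.trans (mul_le_mul_of_nonneg_right hCc (by positivity))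
  rw [hKr, hMr] at hchain2
  nlinarith

end
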